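/- The 8-ary Boolean relation R = { (x₁,x₂,x₃,x₄,x₅,x₆,c₀,c₁) ∈ Bool⁸ | (x₁ ⊕ x₂ ⊕ x₃ = 0) ∧ (x₄ = ¬x₁) ∧ (x₅ = ¬x₂) ∧ (x₆ = ¬x₃) ∧ (c₀ = 0) ∧ (c₁ = 1) } is a weak base of the co-clone it generates (this co-clone is IL₂ in Post's lattice): for every finite set Δ of Boolean relations with Pol(Δ) = Pol({R}) one has pPol(Δ) ⊆ pPol({R}). -/

import Mathlib

/-- A Boolean relation of arity `k`: a set of `k`-tuples over `Bool`. -/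
abbrev BRel (k : ℕ) := Set (Fin k → Bool)

/-- A total `m`-ary Boolean operation `f` preserves a `k`-ary relation `R`. -/
def Preserves {m k : ℕ} (f : (Fin m → Bool) → Bool) (R : BRel k) : Prop :=
  ∀ ts : Fin m → Fin k → Bool, (∀ j, ts j ∈ R) → (fun i => f (fun j => ts j i)) ∈ R

/-- A partial `m`-ary Boolean operation (modelled with `Option Bool`; `none` =
undefined) preserves a `k`-ary relation `R`. -/
def PPreserves {m k : ℕ} (f : (Fin m → Bool) → Option Bool) (R : BRel k) : Prop :=
  ∀ ts : Fin m → Fin k → Bool, (∀ j, ts j ∈ R) →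
    ∀ u : Fin k → Bool, (∀ i, f (fun j => ts j i) = some (u i)) → u ∈ R

/-- The set of all (finitary, total) polymorphisms of a set of relations. -/
def Pol (Γ : Set (Σ k, BRel k)) : Set (Σ m, (Fin m → Bool) → Bool) :=
  { f | ∀ R ∈ Γ, Preserves f.2 R.2 }

/-- The set of all partial polymorphisms of a set of relations. -/
def pPol (Γ : Set (Σ k, BRel k)) : Set (Σ m, (Fin m → Bool) → Option Bool) :=
  { f | ∀ R ∈ Γ, PPreserves f.2 R.2 }

/-- `R` is a weak base of the co-clone it generates: every finite `Δ` with the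
same polymorphisms as `R` satisfies `pPol Δ ⊆ pPol {R}`. -/
def IsWeakBase {k : ℕ} (R : BRel k) : Prop :=
  ∀ Δ : Set (Σ k, BRel k), Δ.Finite →
    Pol Δ = Pol {⟨k, R⟩} → pPol Δ ⊆ pPol {⟨k, R⟩}

/-!
Every tuple of `R` is determined by its first two coordinates `(a, b)`, and its eight
coordinates are the eight affine functions of `(a, b)`; so a column of a matrix with
rows in `R` is named by an affine function, i.e. by its values at `(0,0)`, `(0,1)`,
`(1,0)`. Given a partial polymorphism `f` of `Δ` and rows of `R` on which `f` yields `u`,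
read `u` as the total ternary operation `Φ v = u (affine function with values v)`.
To see `Φ ∈ Pol Δ`, feed `f` the rows of a relation `D ∈ Δ` interpolated along these
affine functions: they lie in `D` because the minority operation `x ⊕ y ⊕ z` is a
polymorphism of `R`, hence of `Δ`, and `f` is then defined on every column. So `Φ`
preserves `R`, and applied to the three tuples of `R` with `(a, b) ≠ (1, 1)` it returns `u`.
-/

def minority (v : Fin 3 → Bool) : Bool := v 0 ^^ (v 1 ^^ v 2)

lemma mem_Pol_singleton {k : ℕ} {R : BRel k} {f : Σ m, (Fin m → Bool) → Bool} :
    f ∈ Pol {⟨k, R⟩} ↔ Preserves f.2 R := by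
  simp [Pol]

lemma mem_pPol_singleton {k : ℕ} {R : BRel k} {f : Σ m, (Fin m → Bool) → Option Bool} :
    f ∈ pPol {⟨k, R⟩} ↔ PPreserves f.2 R := by
  simp [pPol]

/-- The value at `(a, b)` of the affine map `Bool² → Bool` taking the values `z 0`, `z 1`,
`z 2` at `(0,0)`, `(0,1)`, `(1,0)`. -/
def affineInterp (a b : Bool) (z : Fin 3 → Bool) : Bool :=
  match a, b with
  | false, false => z 0
  | false, true => z 1
  | true, false => z 2
  | true, true => minority z

lemma affineInterp_mem_of_preserves_minority {k : ℕ} {D : BRel k}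
    (hD : Preserves minority D) {rs : Fin 3 → Fin k → Bool} (hrs : ∀ l, rs l ∈ D)
    (a b : Bool) : (fun i => affineInterp a b (fun l => rs l i)) ∈ D := by
  cases a <;> cases b
  exacts [hrs 0, hrs 1, hrs 2, hD rs hrs]

def relIL2 : BRel 8 := { t : Fin 8 → Bool |
  Bool.xor (t 0) (Bool.xor (t 1) (t 2)) = false ∧
  t 3 = ! t 0 ∧ t 4 = ! t 1 ∧ t 5 = ! t 2 ∧
  t 6 = false ∧ t 7 = true }

/-- The `i`-th coordinate of the tuple of `relIL2` whose first two coordinates are `a, b`. -/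
def affineCoord : Fin 8 → Bool → Bool → Bool
  | 0, a, _ => a
  | 1, _, b => b
  | 2, a, b => a ^^ b
  | 3, a, _ => !a
  | 4, _, b => !b
  | 5, a, b => !(a ^^ b)
  | 6, _, _ => false
  | 7, _, _ => true

def rowIL2 (a b : Bool) : Fin 8 → Bool := fun i => affineCoord i a b

/-- The coordinate of `relIL2` carrying the affine function `affineInterp · · z`. -/
def affineIndex (z : Fin 3 → Bool) : Fin 8 :=
  match z 0, z 1, z 2 with
  | false, false, false => 6
  | false, false, true => 0
  | false, true, false => 1
  | false, true, true => 2
  | true, false, false => 5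
  | true, false, true => 4
  | true, true, false => 3
  | true, true, true => 7

lemma affineCoord_affineIndex (z : Fin 3 → Bool) (a b : Bool) :
    affineCoord (affineIndex z) a b = affineInterp a b z := by
  revert z a b
  decide

lemma affineCoord_minority (i : Fin 8) (a b : Fin 3 → Bool) :
    affineCoord i (minority a) (minority b) = minority (fun l => affineCoord i (a l) (b l)) := by
  revert i a b
  decide

lemma rowIL2_mem (a b : Bool) : rowIL2 a b ∈ relIL2 := by
  cases a <;> cases b <;> exact ⟨rfl, rfl, rfl, rfl, rfl, rfl⟩

lemma eq_rowIL2_of_mem {t : Fin 8 → Bool} (ht : t ∈ relIL2) : t = rowIL2 (t 0) (t 1) := by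
  obtain ⟨h2, h3, h4, h5, h6, h7⟩ := ht
  have h2' : t 2 = (t 0 ^^ t 1) := by
    revert h2; cases t 0 <;> cases t 1 <;> cases t 2 <;> decide
  rw [h2'] at h5
  funext i
  fin_cases i
  exacts [rfl, rfl, h2', h3, h4, h5, h6, h7]

lemma preserves_minority_relIL2 : Preserves minority relIL2 := by
  intro ts hts
  have hrow : ∀ j, ts j = rowIL2 (ts j 0) (ts j 1) := fun j => eq_rowIL2_of_mem (hts j)
  convert rowIL2_mem (minority fun j => ts j 0) (minority fun j => ts j 1) using 1
  funext i
  rw [rowIL2, affineCoord_minority]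
  exact congrArg minority (funext fun j => congrFun (hrow j) i)

def baseRows : Fin 3 → Fin 8 → Bool := ![rowIL2 false false, rowIL2 false true, rowIL2 true false]

lemma affineIndex_baseRows (i : Fin 8) : affineIndex (fun l => baseRows l i) = i := by
  revert i
  decide

lemma preserves_affineIndex_of_pPreserves {m k : ℕ} {D : BRel k}
    (hD : Preserves minority D) {f : (Fin m → Bool) → Option Bool} (hf : PPreserves f D)
    {ts : Fin m → Fin 8 → Bool} (hts : ∀ j, ts j ∈ relIL2) {u : Fin 8 → Bool}
    (hu : ∀ i, f (fun j => ts j i) = some (u i)) :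
    Preserves (fun v => u (affineIndex v)) D := by
  intro rs hrs
  refine hf (fun j i => affineInterp (ts j 0) (ts j 1) (fun l => rs l i))
    (fun j => affineInterp_mem_of_preserves_minority hD hrs _ _) _ fun i => ?_
  have hcol : (fun j => affineInterp (ts j 0) (ts j 1) (fun l => rs l i)) =
      fun j => ts j (affineIndex fun l => rs l i) := by
    funext j
    rw [← affineCoord_affineIndex, eq_rowIL2_of_mem (hts j)]
    rfl
  rw [hcol]
  exact hu _

lemma mem_relIL2_of_preserves_affineIndex {u : Fin 8 → Bool}
    (hu : Preserves (fun v => u (affineIndex v)) relIL2) : u ∈ relIL2 := by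
  have h := hu baseRows fun l => by fin_cases l <;> exact rowIL2_mem _ _
  simpa only [affineIndex_baseRows] using h

theorem stmt17 :
    IsWeakBase { t : Fin 8 → Bool |
      Bool.xor (t 0) (Bool.xor (t 1) (t 2)) = false ∧
      t 3 = ! t 0 ∧ t 4 = ! t 1 ∧ t 5 = ! t 2 ∧
      t 6 = false ∧ t 7 = true } := by
  intro Δ _ hpol ⟨m, f⟩ hf
  refine mem_pPol_singleton.2 fun ts hts u hu => ?_
  have hminority : (⟨3, minority⟩ : Σ m, (Fin m → Bool) → Bool) ∈ Pol Δ :=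
    hpol ▸ mem_Pol_singleton.2 preserves_minority_relIL2
  have hΦ : (⟨3, fun v => u (affineIndex v)⟩ : Σ m, (Fin m → Bool) → Bool) ∈ Pol Δ :=
    fun D hD => preserves_affineIndex_of_pPreserves (hminority D hD) (hf D hD) hts hu
  rw [hpol] at hΦ
  exact mem_relIL2_of_preserves_affineIndex (mem_Pol_singleton.1 hΦ)
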